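/- arXiv:2506.22203 — 9 statements merged into one kernel-verified Lean document; each statement's English description precedes it below -/
import Mathlib

section
/- The function g(x) = K₁·e^{a·x} + C₂·e^{λ₂·x} satisfies the smooth-fit conditions g′(x̂) = c and g″(x̂) = 0; explicitly, K₁·a·e^{a·x̂} + C₂·λ₂·e^{λ₂·x̂} = c and K₁·a²·e^{a·x̂} + C₂·λ₂²·e^{λ₂·x̂} = 0. -/
open Real

/-!
Only $x \mapsto e^{a x}$ and $x \mapsto e^{\lambda_2 x}$ enter, so both smooth-fit conditions are
linear in $e^{a\hat x}$ once $C_2 e^{\lambda_2 \hat x} = -\frac{a^2}{\lambda_2^2 D} e^{a \hat x}$ with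
$D = \beta - \mu a - \tfrac12\sigma^2 a^2$. The second-order condition then holds identically, and the
first-order one is exactly the defining equation $e^{a\hat x} = \lambda_2 c D / (\lambda_2 a - a^2)$
of $\hat x$. That this equation is solvable, i.e. its right side is positive, comes from
$\lambda_2 > a$: the characteristic polynomial $\tfrac12\sigma^2\lambda^2 + \mu\lambda - \beta$ has
value $-D < 0$ at $a$, so $a$ lies below its larger root $\lambda_2$.
-/

theorem deriv_const_mul_exp_add_const_mul_exp (K L p q : ℝ) :
    deriv (fun x => K * exp (p * x) + L * exp (q * x)) =
      fun x => K * p * exp (p * x) + L * q * exp (q * x) := by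
  funext x
  have hp : HasDerivAt (fun x => K * exp (p * x)) (K * p * exp (p * x)) x := by
    simpa [mul_assoc, mul_comm (exp _)] using ((hasDerivAt_id x).const_mul p).exp.const_mul K
  have hq : HasDerivAt (fun x => L * exp (q * x)) (L * q * exp (q * x)) x := by
    simpa [mul_assoc, mul_comm (exp _)] using ((hasDerivAt_id x).const_mul q).exp.const_mul L
  exact (hp.add hq).deriv

theorem lt_neg_add_sqrt_div {μ σ a β : ℝ} (hσ : 0 < σ)
    (h : β > μ * a + (1/2) * σ^2 * a^2) :
    a < (-μ + √(μ^2 + 2*β*σ^2)) / σ^2 := by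
  have hσ2 : 0 < σ^2 := by positivity
  have hsq : (σ^2 * a + μ)^2 < μ^2 + 2*β*σ^2 := by nlinarith
  have hroot : σ^2 * a + μ < √(μ^2 + 2*β*σ^2) :=
    calc σ^2 * a + μ ≤ |σ^2 * a + μ| := le_abs_self _
      _ = √((σ^2 * a + μ)^2) := (sqrt_sq_eq_abs _).symm
      _ < √(μ^2 + 2*β*σ^2) := sqrt_lt_sqrt (sq_nonneg _) hsq
  rw [lt_div_iff₀ hσ2]
  linarith

section SmoothFit

variable {a q c D K C x : ℝ}

theorem const_mul_exp_eq_of_eq (hC : C = -(a^2 / (q^2 * D)) * exp ((a - q) * x)) :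
    C * exp (q * x) = -(a^2 / (q^2 * D)) * exp (a * x) := by
  rw [hC, mul_assoc, ← exp_add]
  ring_nf

theorem smooth_fit_second_order (hq : q ≠ 0) (hK : K = 1 / D)
    (hC : C = -(a^2 / (q^2 * D)) * exp ((a - q) * x)) :
    K * a^2 * exp (a * x) + C * q^2 * exp (q * x) = 0 := by
  rw [mul_right_comm C, const_mul_exp_eq_of_eq hC, hK]
  field_simp
  ring

theorem smooth_fit_first_order (ha : a ≠ 0) (hq : q ≠ 0) (hqa : q ≠ a) (hD : D ≠ 0)
    (hK : K = 1 / D) (hC : C = -(a^2 / (q^2 * D)) * exp ((a - q) * x))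
    (hx : exp (a * x) = q * c * D / (q * a - a^2)) :
    K * a * exp (a * x) + C * q * exp (q * x) = c := by
  have hden : q * a - a^2 ≠ 0 := by
    rw [show q * a - a^2 = a * (q - a) by ring]
    exact mul_ne_zero ha (sub_ne_zero.mpr hqa)
  rw [mul_right_comm C, const_mul_exp_eq_of_eq hC, hK, hx]
  field_simp
  ring

end SmoothFit

theorem stmt_3_general
    (μ σ c a β : ℝ)
    (hσ : σ > 0) (hc : c > 0) (ha : a > 0)
    (hβ' : β > μ * a + (1/2) * σ^2 * a^2)
    (lam₂ K₁ xhat C₂ : ℝ)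
    (hlam₂ : lam₂ = (-μ + Real.sqrt (μ^2 + 2*β*σ^2)) / σ^2)
    (hK₁ : K₁ = 1 / (β - μ*a - (1/2)*σ^2*a^2))
    (hxhat : xhat = (1/a) * Real.log (lam₂*c*(β - μ*a - (1/2)*σ^2*a^2) / (lam₂*a - a^2)))
    (hC₂ : C₂ = -(a^2 / (lam₂^2 * (β - μ*a - (1/2)*σ^2*a^2))) * Real.exp ((a - lam₂) * xhat))
    :
    deriv (fun x => K₁ * Real.exp (a*x) + C₂ * Real.exp (lam₂*x)) xhat = c ∧
    deriv (deriv (fun x => K₁ * Real.exp (a*x) + C₂ * Real.exp (lam₂*x))) xhat = 0 ∧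
    K₁*a*Real.exp (a*xhat) + C₂*lam₂*Real.exp (lam₂*xhat) = c ∧
    K₁*a^2*Real.exp (a*xhat) + C₂*lam₂^2*Real.exp (lam₂*xhat) = 0 := by
  set D := β - μ*a - (1/2)*σ^2*a^2
  have hD : 0 < D := by simp only [D]; linarith
  have hlam_gt : a < lam₂ := hlam₂ ▸ lt_neg_add_sqrt_div hσ hβ'
  have hlam_pos : 0 < lam₂ := ha.trans hlam_gt
  have harg : 0 < lam₂*c*D / (lam₂*a - a^2) :=
    div_pos (by positivity) (by nlinarith)
  have hexp : exp (a * xhat) = lam₂*c*D / (lam₂*a - a^2) := by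
    rw [hxhat, ← mul_assoc, mul_one_div_cancel ha.ne', one_mul, exp_log harg]
  have first := smooth_fit_first_order ha.ne' hlam_pos.ne' hlam_gt.ne' hD.ne' hK₁ hC₂ hexp
  have second := smooth_fit_second_order hlam_pos.ne' hK₁ hC₂
  refine ⟨?_, ?_, first, second⟩
  · rw [deriv_const_mul_exp_add_const_mul_exp]
    exact first
  · rw [deriv_const_mul_exp_add_const_mul_exp, deriv_const_mul_exp_add_const_mul_exp]
    linear_combination second

theorem stmt_3
    (μ σ c a β : ℝ)
    (hσ : σ > 0) (hc : c > 0) (ha : a > 0) (hβ : β > 0)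
    (hβ' : β > μ * a + (1/2) * σ^2 * a^2)
    (lam₁ lam₂ K₁ xhat C₂ : ℝ)
    (hlam₁ : lam₁ = (-μ - Real.sqrt (μ^2 + 2*β*σ^2)) / σ^2)
    (hlam₂ : lam₂ = (-μ + Real.sqrt (μ^2 + 2*β*σ^2)) / σ^2)
    (hK₁ : K₁ = 1 / (β - μ*a - (1/2)*σ^2*a^2))
    (hxhat : xhat = (1/a) * Real.log (lam₂*c*(β - μ*a - (1/2)*σ^2*a^2) / (lam₂*a - a^2)))
    (hC₂ : C₂ = -(a^2 / (lam₂^2 * (β - μ*a - (1/2)*σ^2*a^2))) * Real.exp ((a - lam₂) * xhat))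
    :
    deriv (fun x => K₁ * Real.exp (a*x) + C₂ * Real.exp (lam₂*x)) xhat = c ∧
    deriv (deriv (fun x => K₁ * Real.exp (a*x) + C₂ * Real.exp (lam₂*x))) xhat = 0 ∧
    K₁*a*Real.exp (a*xhat) + C₂*lam₂*Real.exp (lam₂*xhat) = c ∧
    K₁*a^2*Real.exp (a*xhat) + C₂*lam₂^2*Real.exp (lam₂*xhat) = 0 :=
  stmt_3_general μ σ c a β hσ hc ha hβ' lam₂ K₁ xhat C₂ hlam₂ hK₁ hxhat hC₂
end

section
/- For every x < x̂ one has K₁·a²·e^{a·x} + C₂·λ₂²·e^{λ₂·x} > 0; that is, the waiting-region candidate value function x ↦ K₁·e^{a·x} + C₂·e^{λ₂·x} has strictly positive second derivative on (−∞, x̂). -/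
open Real Filter

/-! With `D = β - μa - σ²a²/2 > 0`, the expression equals
`(a²/D) (e^{ax} - e^{(a-λ₂)x̂ + λ₂x})`, and the exponents differ by `(λ₂ - a)(x̂ - x) > 0`.
Here `a < λ₂` because `λ₂` is the larger root of `σ²λ²/2 + μλ - β`, which is negative at `a`. -/

lemma lt_larger_root_of_quadratic_neg {μ σ a β : ℝ} (hσ : σ ≠ 0)
    (h : μ * a + σ ^ 2 * a ^ 2 / 2 < β) :
    a < (-μ + √(μ ^ 2 + 2 * β * σ ^ 2)) / σ ^ 2 := by
  have hσ2 : 0 < σ ^ 2 := by positivity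
  rw [lt_div_iff₀ hσ2, lt_neg_add_iff_add_lt]
  apply Real.lt_sqrt_of_sq_lt
  nlinarith [mul_lt_mul_of_pos_left h hσ2]

lemma exp_sub_mul_mul_exp_lt_exp {a l x y : ℝ} (hal : a < l) (hxy : x < y) :
    exp ((a - l) * y) * exp (l * x) < exp (a * x) := by
  rw [← exp_add, exp_lt_exp]
  nlinarith [mul_pos (sub_pos.mpr hal) (sub_pos.mpr hxy)]

theorem stmt_5_general
    (μ σ a β : ℝ)
    (hσ : σ > 0) (ha : a > 0)
    (hβ' : β > μ * a + (1/2) * σ^2 * a^2)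
    (lam₂ K₁ xhat C₂ : ℝ)
    (hlam₂ : lam₂ = (-μ + Real.sqrt (μ^2 + 2*β*σ^2)) / σ^2)
    (hK₁ : K₁ = 1 / (β - μ*a - (1/2)*σ^2*a^2))
    (hC₂ : C₂ = -(a^2 / (lam₂^2 * (β - μ*a - (1/2)*σ^2*a^2))) * Real.exp ((a - lam₂) * xhat))
    :
    ∀ x : ℝ, x < xhat → K₁*a^2*Real.exp (a*x) + C₂*lam₂^2*Real.exp (lam₂*x) > 0 := by
  intro x hx
  have hD : 0 < β - μ * a - (1/2) * σ ^ 2 * a ^ 2 := by linarith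
  set D := β - μ * a - (1/2) * σ ^ 2 * a ^ 2
  have hal : a < lam₂ := hlam₂ ▸ lt_larger_root_of_quadratic_neg hσ.ne' (by linarith)
  have hlam₂0 : lam₂ ≠ 0 := by linarith
  have hfactor : K₁ * a ^ 2 * exp (a * x) + C₂ * lam₂ ^ 2 * exp (lam₂ * x)
      = a ^ 2 / D * (exp (a * x) - exp ((a - lam₂) * xhat) * exp (lam₂ * x)) := by
    rw [hK₁, hC₂]
    field_simp
    ring
  rw [hfactor]
  exact mul_pos (by positivity) (sub_pos.mpr (exp_sub_mul_mul_exp_lt_exp hal hx))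

theorem stmt_5
    (μ σ c a β : ℝ)
    (hσ : σ > 0) (hc : c > 0) (ha : a > 0) (hβ : β > 0)
    (hβ' : β > μ * a + (1/2) * σ^2 * a^2)
    (lam₁ lam₂ K₁ xhat C₂ : ℝ)
    (hlam₁ : lam₁ = (-μ - Real.sqrt (μ^2 + 2*β*σ^2)) / σ^2)
    (hlam₂ : lam₂ = (-μ + Real.sqrt (μ^2 + 2*β*σ^2)) / σ^2)
    (hK₁ : K₁ = 1 / (β - μ*a - (1/2)*σ^2*a^2))
    (hxhat : xhat = (1/a) * Real.log (lam₂*c*(β - μ*a - (1/2)*σ^2*a^2) / (lam₂*a - a^2)))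
    (hC₂ : C₂ = -(a^2 / (lam₂^2 * (β - μ*a - (1/2)*σ^2*a^2))) * Real.exp ((a - lam₂) * xhat))
    :
    ∀ x : ℝ, x < xhat → K₁*a^2*Real.exp (a*x) + C₂*lam₂^2*Real.exp (lam₂*x) > 0 :=
  stmt_5_general μ σ a β hσ ha hβ' lam₂ K₁ xhat C₂ hlam₂ hK₁ hC₂
end

section
/- For every x < x̂ one has K₁·a·e^{a·x} + C₂·λ₂·e^{λ₂·x} < c; that is, the zero-order q-function c − V′(x) of the candidate optimal law is strictly positive on the waiting region (−∞, x̂), where V(x) = K₁·e^{a·x} + C₂·e^{λ₂·x} there. -/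
/-!
Write `D = β - μa - σ²a²/2 > 0`, so that `a` lies strictly between the roots of
`σ²λ²/2 + μλ - β`, i.e. `a < λ₂`. The choice of `x̂` means `e^{a x̂} = λ₂cD / (a(λ₂ - a))`, and with
`t = x - x̂` the left-hand side becomes `c/(λ₂ - a) · (λ₂ e^{at} - a e^{λ₂t})`. The bracket has
derivative `aλ₂ (e^{at} - e^{λ₂t}) > 0` for `t < 0`, so it is strictly below its value `λ₂ - a`
at `t = 0`.
-/

open Real

lemma lt_div_of_quadratic_neg {μ σ a β : ℝ} (hσ : 0 < σ)
    (h : μ * a + 1/2 * σ^2 * a^2 < β) :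
    a < (-μ + √(μ^2 + 2*β*σ^2)) / σ^2 := by
  rw [lt_div_iff₀ (by positivity)]
  have hsq : (a*σ^2 + μ)^2 < μ^2 + 2*β*σ^2 := by nlinarith [pow_pos hσ 2]
  linarith [lt_sqrt_of_sq_lt hsq]

lemma strictMonoOn_mul_exp_sub_mul_exp {a L : ℝ} (ha : 0 < a) (haL : a < L) :
    StrictMonoOn (fun t => L * exp (a*t) - a * exp (L*t)) (Set.Iic 0) := by
  refine strictMonoOn_of_deriv_pos (convex_Iic 0) (by fun_prop) fun t ht => ?_
  rw [interior_Iic, Set.mem_Iio] at ht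
  have hderiv : HasDerivAt (fun t => L * exp (a*t) - a * exp (L*t))
      (a * L * (exp (a*t) - exp (L*t))) t := by
    refine ((((hasDerivAt_id' t).const_mul a).exp.const_mul L).fun_sub
      (((hasDerivAt_id' t).const_mul L).exp.const_mul a)).congr_deriv ?_
    ring
  rw [hderiv.deriv]
  have hexp : exp (L*t) < exp (a*t) := exp_lt_exp.mpr (by nlinarith)
  exact mul_pos (mul_pos ha (ha.trans haL)) (sub_pos.mpr hexp)

lemma mul_exp_sub_mul_exp_lt {a L t : ℝ} (ha : 0 < a) (haL : a < L) (ht : t < 0) :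
    L * exp (a*t) - a * exp (L*t) < L - a := by
  simpa using strictMonoOn_mul_exp_sub_mul_exp ha haL (Set.mem_Iic.mpr ht.le)
    (Set.mem_Iic.mpr le_rfl) ht

lemma exp_mul_one_div_mul_log {a y : ℝ} (ha : a ≠ 0) (hy : 0 < y) :
    exp (a * (1/a * log y)) = y := by
  rw [← mul_assoc, mul_one_div_cancel ha, one_mul, exp_log hy]

lemma candidate_derivative_eq {a c D L xhat : ℝ} (ha : 0 < a) (hD : D ≠ 0) (haL : a < L)
    (hE : exp (a * xhat) = L*c*D / (L*a - a^2)) (x : ℝ) :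
    1/D * a * exp (a*x) + -(a^2 / (L^2 * D)) * exp ((a - L) * xhat) * L * exp (L*x)
      = c / (L - a) * (L * exp (a*(x - xhat)) - a * exp (L*(x - xhat))) := by
  have hax : exp (a*x) = exp (a*xhat) * exp (a*(x - xhat)) := by
    rw [← exp_add]; ring_nf
  have hLx : exp ((a - L) * xhat) * exp (L*x) = exp (a*xhat) * exp (L*(x - xhat)) := by
    rw [← exp_add, ← exp_add]; ring_nf
  have hL : L ≠ 0 := (ha.trans haL).ne'
  have hLa : L - a ≠ 0 := sub_ne_zero.mpr haL.ne'
  have hden : L*a - a^2 = a * (L - a) := by ring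
  rw [show ∀ u v : ℝ, -(a^2 / (L^2 * D)) * u * L * v = -(a^2 / (L^2 * D)) * L * (u * v) by
    intros; ring, hax, hLx, hE, hden]
  field_simp
  ring

theorem stmt_6_general
    (μ σ c a β : ℝ)
    (hσ : σ > 0) (hc : c > 0) (ha : a > 0)
    (hβ' : β > μ * a + (1/2) * σ^2 * a^2)
    (lam₂ K₁ xhat C₂ : ℝ)
    (hlam₂ : lam₂ = (-μ + Real.sqrt (μ^2 + 2*β*σ^2)) / σ^2)
    (hK₁ : K₁ = 1 / (β - μ*a - (1/2)*σ^2*a^2))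
    (hxhat : xhat = (1/a) * Real.log (lam₂*c*(β - μ*a - (1/2)*σ^2*a^2) / (lam₂*a - a^2)))
    (hC₂ : C₂ = -(a^2 / (lam₂^2 * (β - μ*a - (1/2)*σ^2*a^2))) * Real.exp ((a - lam₂) * xhat))
    :
    ∀ x : ℝ, x < xhat → K₁*a*Real.exp (a*x) + C₂*lam₂*Real.exp (lam₂*x) < c := by
  set D := β - μ*a - (1/2)*σ^2*a^2 with hD_def
  have hD : 0 < D := by rw [hD_def]; linarith
  have haL : a < lam₂ := hlam₂ ▸ lt_div_of_quadratic_neg hσ hβ'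
  have hE : exp (a * xhat) = lam₂*c*D / (lam₂*a - a^2) := by
    have hL : 0 < lam₂ := ha.trans haL
    have hden : 0 < lam₂*a - a^2 := by nlinarith
    rw [hxhat, exp_mul_one_div_mul_log ha.ne' (by positivity)]
  intro x hx
  rw [hK₁, hC₂, candidate_derivative_eq ha hD.ne' haL hE]
  have hLa : 0 < lam₂ - a := sub_pos.mpr haL
  calc c / (lam₂ - a) * (lam₂ * exp (a*(x - xhat)) - a * exp (lam₂*(x - xhat)))
      < c / (lam₂ - a) * (lam₂ - a) :=
        mul_lt_mul_of_pos_left (mul_exp_sub_mul_exp_lt ha haL (by linarith)) (div_pos hc hLa)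
    _ = c := div_mul_cancel₀ c hLa.ne'

theorem stmt_6
    (μ σ c a β : ℝ)
    (hσ : σ > 0) (hc : c > 0) (ha : a > 0) (hβ : β > 0)
    (hβ' : β > μ * a + (1/2) * σ^2 * a^2)
    (lam₁ lam₂ K₁ xhat C₂ : ℝ)
    (hlam₁ : lam₁ = (-μ - Real.sqrt (μ^2 + 2*β*σ^2)) / σ^2)
    (hlam₂ : lam₂ = (-μ + Real.sqrt (μ^2 + 2*β*σ^2)) / σ^2)
    (hK₁ : K₁ = 1 / (β - μ*a - (1/2)*σ^2*a^2))
    (hxhat : xhat = (1/a) * Real.log (lam₂*c*(β - μ*a - (1/2)*σ^2*a^2) / (lam₂*a - a^2)))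
    (hC₂ : C₂ = -(a^2 / (lam₂^2 * (β - μ*a - (1/2)*σ^2*a^2))) * Real.exp ((a - lam₂) * xhat))
    :
    ∀ x : ℝ, x < xhat → K₁*a*Real.exp (a*x) + C₂*lam₂*Real.exp (lam₂*x) < c :=
  stmt_6_general μ σ c a β hσ hc ha hβ' lam₂ K₁ xhat C₂ hlam₂ hK₁ hxhat hC₂
end

section
/- For every x ≥ x̂ one has e^{a·x} − β·( c·(x − x̂) + K₁·e^{a·x̂} + C₂·e^{λ₂·x̂} ) + μ·c ≥ 0, with equality when x = x̂; that is, the first-order q-function of the candidate optimal law is nonnegative on the action region [x̂, ∞) and vanishes at the free boundary x̂. -/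
/-!
Write `D = β - μa - σ²a²/2 > 0`. The root `λ₂` solves the characteristic equation
`σ²λ²/2 + μλ = β`, which factors `D = (λ₂ - a)(μ + σ²(λ₂ + a)/2)` and so forces `a < λ₂`.
With this, `e^{a x̂} = λ₂ c (μ + σ²(λ₂ + a)/2) / a`, and the value of the q-function at `x̂`
collapses to zero by field arithmetic. On `[x̂, ∞)` the q-function is convex with slope
`a e^{a x̂} - βc = λ₂ c σ² a / 2 ≥ 0` at `x̂`, so it stays above its value `0` there.
-/

open Real

section CharacteristicRoot

variable {μ σ β lam a : ℝ}

lemma sq_mul_add_eq_sqrt (hσ : σ ≠ 0) (hlam : lam = (-μ + √(μ^2 + 2*β*σ^2)) / σ^2) :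
    σ^2 * lam + μ = √(μ^2 + 2*β*σ^2) := by
  rw [hlam]
  field_simp
  ring

lemma char_eq_of_sq_mul_add_eq_sqrt (hσ : σ ≠ 0) (hd : 0 ≤ μ^2 + 2*β*σ^2)
    (hroot : σ^2 * lam + μ = √(μ^2 + 2*β*σ^2)) :
    β = μ * lam + (1/2) * σ^2 * lam^2 := by
  have hsq : (σ^2 * lam + μ)^2 = μ^2 + 2*β*σ^2 := by rw [hroot, sq_sqrt hd]
  have hσ2 : σ^2 ≠ 0 := pow_ne_zero 2 hσ
  apply mul_right_cancel₀ hσ2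
  linear_combination (-1/2 : ℝ) * hsq

lemma sub_eq_mul_of_char_eq (hchar : β = μ * lam + (1/2) * σ^2 * lam^2) :
    β - μ*a - (1/2)*σ^2*a^2 = (lam - a) * (μ + (1/2) * σ^2 * (lam + a)) := by
  linear_combination hchar

lemma lt_of_char_eq (hchar : β = μ * lam + (1/2) * σ^2 * lam^2) (hmono : 0 ≤ σ^2 * lam + μ)
    (ha : μ * a + (1/2) * σ^2 * a^2 < β) :
    a < lam := by
  by_contra! hle
  have hfac : 0 ≤ μ + (1/2) * σ^2 * (lam + a) := by nlinarith [sq_nonneg σ]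
  have hprod := mul_nonpos_of_nonpos_of_nonneg (sub_nonpos.2 hle) hfac
  linarith [sub_eq_mul_of_char_eq (a := a) hchar]

end CharacteristicRoot

lemma exp_mul_tangent_le {a x₀ x : ℝ} :
    exp (a * x₀) * (1 + a * (x - x₀)) ≤ exp (a * x) := by
  have hsplit : exp (a * x) = exp (a * x₀) * exp (a * (x - x₀)) := by
    rw [← exp_add]; ring_nf
  rw [hsplit, add_comm 1]
  exact mul_le_mul_of_nonneg_left (add_one_le_exp _) (exp_pos _).le

lemma exp_mul_sub_linear_nonneg {a b x₀ x : ℝ} (hb : b ≤ a * exp (a * x₀)) (hx : x₀ ≤ x) :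
    0 ≤ exp (a * x) - b * (x - x₀) - exp (a * x₀) := by
  nlinarith [exp_mul_tangent_le (a := a) (x₀ := x₀) (x := x),
    mul_le_mul_of_nonneg_right hb (sub_nonneg.2 hx)]

section QFunction

variable {μ σ β c a lam D E : ℝ}

lemma q_function_at_boundary_eq_zero (hchar : β = μ * lam + (1/2) * σ^2 * lam^2)
    (ha : a ≠ 0) (hlam : lam ≠ 0) (hD : D ≠ 0)
    (hDfac : D = (lam - a) * (μ + (1/2) * σ^2 * (lam + a)))
    (hE : a * E = lam * c * (μ + (1/2) * σ^2 * (lam + a))) :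
    E - β * (1 / D * E + -(a^2 / (lam^2 * D)) * E) + μ*c = 0 := by
  field_simp
  subst hchar hDfac
  refine mul_left_cancel₀ ha ?_
  linear_combination ((lam - a) * (μ + (1/2) * σ^2 * (lam + a)) * lam^2
    - (μ * lam + (1/2) * σ^2 * lam^2) * (lam^2 - a^2)) * hE

lemma mul_le_slope_of_char_eq (hchar : β = μ * lam + (1/2) * σ^2 * lam^2)
    (hE : a * E = lam * c * (μ + (1/2) * σ^2 * (lam + a)))
    (hlam : 0 ≤ lam) (hc : 0 ≤ c) (ha : 0 ≤ a) :
    β * c ≤ a * E := by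
  have hslope : a * E - β * c = lam * c * ((1/2) * σ^2 * a) := by
    linear_combination hE - c * hchar
  have hpos : 0 ≤ lam * c * ((1/2) * σ^2 * a) := by positivity
  linarith

end QFunction

theorem stmt_7_general
    (μ σ c a β : ℝ)
    (hσ : σ > 0) (hc : c > 0) (ha : a > 0)
    (hβ' : β > μ * a + (1/2) * σ^2 * a^2)
    (lam₂ K₁ xhat C₂ : ℝ)
    (hlam₂ : lam₂ = (-μ + Real.sqrt (μ^2 + 2*β*σ^2)) / σ^2)
    (hK₁ : K₁ = 1 / (β - μ*a - (1/2)*σ^2*a^2))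
    (hxhat : xhat = (1/a) * Real.log (lam₂*c*(β - μ*a - (1/2)*σ^2*a^2) / (lam₂*a - a^2)))
    (hC₂ : C₂ = -(a^2 / (lam₂^2 * (β - μ*a - (1/2)*σ^2*a^2))) * Real.exp ((a - lam₂) * xhat))
    :
    (∀ x : ℝ, x ≥ xhat →
      Real.exp (a*x) - β * (c*(x - xhat) + K₁*Real.exp (a*xhat) + C₂*Real.exp (lam₂*xhat)) + μ*c ≥ 0) ∧
    Real.exp (a*xhat) - β * (c*(xhat - xhat) + K₁*Real.exp (a*xhat) + C₂*Real.exp (lam₂*xhat)) + μ*c = 0 := by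
  have hd : 0 ≤ μ^2 + 2*β*σ^2 := by nlinarith [sq_nonneg (μ + σ^2*a)]
  have hroot := sq_mul_add_eq_sqrt hσ.ne' hlam₂
  have hchar := char_eq_of_sq_mul_add_eq_sqrt hσ.ne' hd hroot
  have hla : a < lam₂ := lt_of_char_eq hchar (hroot ▸ sqrt_nonneg _) (by linarith)
  set D := β - μ*a - (1/2)*σ^2*a^2
  set F := μ + (1/2)*σ^2*(lam₂ + a)
  have hDfac : D = (lam₂ - a) * F := sub_eq_mul_of_char_eq hchar
  have hD : 0 < D := by simp only [D]; linarith
  have hF : 0 < F := pos_of_mul_pos_right (hDfac ▸ hD) (sub_pos.2 hla).le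
  have hlam : 0 < lam₂ := ha.trans hla
  have hratio : lam₂ * c * D / (lam₂*a - a^2) = lam₂ * c * F / a := by
    rw [hDfac, div_eq_div_iff (by nlinarith) ha.ne']
    ring
  have hE : a * exp (a*xhat) = lam₂ * c * F := by
    rw [hxhat, ← mul_assoc, mul_one_div_cancel ha.ne', one_mul, hratio,
      exp_log (by positivity)]
    field_simp
  have hC : C₂ * exp (lam₂*xhat) = -(a^2 / (lam₂^2 * D)) * exp (a*xhat) := by
    rw [hC₂, mul_assoc, ← exp_add]
    ring_nf
  have hzero := q_function_at_boundary_eq_zero hchar ha.ne' hlam.ne' hD.ne' hDfac hE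
  have hslope := mul_le_slope_of_char_eq hchar hE hlam.le hc.le ha.le
  rw [hK₁, hC]
  refine ⟨fun x hx => ?_, by simpa using hzero⟩
  linarith [exp_mul_sub_linear_nonneg hslope hx]

theorem stmt_7
    (μ σ c a β : ℝ)
    (hσ : σ > 0) (hc : c > 0) (ha : a > 0) (hβ : β > 0)
    (hβ' : β > μ * a + (1/2) * σ^2 * a^2)
    (lam₁ lam₂ K₁ xhat C₂ : ℝ)
    (hlam₁ : lam₁ = (-μ - Real.sqrt (μ^2 + 2*β*σ^2)) / σ^2)
    (hlam₂ : lam₂ = (-μ + Real.sqrt (μ^2 + 2*β*σ^2)) / σ^2)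
    (hK₁ : K₁ = 1 / (β - μ*a - (1/2)*σ^2*a^2))
    (hxhat : xhat = (1/a) * Real.log (lam₂*c*(β - μ*a - (1/2)*σ^2*a^2) / (lam₂*a - a^2)))
    (hC₂ : C₂ = -(a^2 / (lam₂^2 * (β - μ*a - (1/2)*σ^2*a^2))) * Real.exp ((a - lam₂) * xhat))
    :
    (∀ x : ℝ, x ≥ xhat →
      Real.exp (a*x) - β * (c*(x - xhat) + K₁*Real.exp (a*xhat) + C₂*Real.exp (lam₂*xhat)) + μ*c ≥ 0) ∧
    Real.exp (a*xhat) - β * (c*(xhat - xhat) + K₁*Real.exp (a*xhat) + C₂*Real.exp (lam₂*xhat)) + μ*c = 0 :=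
  stmt_7_general μ σ c a β hσ hc ha hβ' lam₂ K₁ xhat C₂ hlam₂ hK₁ hxhat hC₂
end

section
/- The function V is twice continuously differentiable on ℝ and satisfies the Hamilton–Jacobi–Bellman variational equality min( e^{a·x} − β·V(x) + μ·V′(x) + (σ²/2)·V″(x), c − V′(x) ) = 0 for every x ∈ ℝ. -/
/-!
On `x < xhat` the value function is the particular solution `K₁ e^{ax}` of the ODE
`(σ²/2) V'' + μ V' - β V + e^{ax} = 0` plus a multiple of `e^{λ₂ x}`, where `λ₂` is the positive
root of the characteristic equation `(σ²/2) λ² + μ λ = β`; on `x ≥ xhat` it is affine of slope `c`.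
The constants `C₂` and `xhat` are exactly the smooth-fit conditions `V'(xhat) = c` and
`V''(xhat) = 0`, so the two pieces glue to a `C²` function. The HJB equality then reduces to two
inequalities: `V' ≤ c` on the left, which after rescaling is the convexity of `exp` (this needs
`a < λ₂`), and `e^{ax} - β V + μ c ≥ 0` on the right, which follows from the tangent-line bound
for `e^{ax}` at `xhat` together with `β c ≤ a e^{a xhat}`.
-/

open Real Set

theorem Continuous.ite_lt {α β : Type*} [TopologicalSpace α] [LinearOrder α]
    [OrderClosedTopology α] [TopologicalSpace β] {f g : α → β} {x₀ : α}
    (hf : Continuous f) (hg : Continuous g) (h₀ : f x₀ = g x₀) :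
    Continuous fun y => if y < x₀ then f y else g y :=
  hf.if (fun y hy => by
    rwa [show y = x₀ from frontier_lt_subset_eq continuous_id continuous_const hy]) hg

section Gluing

variable {E : Type*} [NormedAddCommGroup E] [NormedSpace ℝ E] {f g : ℝ → E} {x₀ : ℝ}

theorem hasDerivAt_ite_lt (hf : Differentiable ℝ f) (hg : Differentiable ℝ g)
    (h₀ : f x₀ = g x₀) (h₁ : deriv f x₀ = deriv g x₀) (x : ℝ) :
    HasDerivAt (fun y => if y < x₀ then f y else g y)
      (if x < x₀ then deriv f x else deriv g x) x := by
  rcases lt_trichotomy x x₀ with hx | rfl | hx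
  · rw [if_pos hx]
    refine (hf x).hasDerivAt.congr_of_eventuallyEq ?_
    filter_upwards [Iio_mem_nhds hx] with y hy using if_pos hy
  · rw [if_neg (lt_irrefl x)]
    have hleft : HasDerivWithinAt (fun y => if y < x then f y else g y) (deriv g x) (Iic x) x := by
      refine h₁ ▸ (hf x).hasDerivAt.hasDerivWithinAt.congr (fun y hy => ?_) (by simp [h₀])
      rcases (mem_Iic.mp hy).lt_or_eq with h | rfl
      · simp [h]
      · simp [h₀]
    have hright : HasDerivWithinAt (fun y => if y < x then f y else g y) (deriv g x) (Ici x) x :=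
      (hg x).hasDerivAt.hasDerivWithinAt.congr (fun y hy => if_neg (not_lt.mpr hy)) (by simp)
    simpa [Iic_union_Ici] using hleft.union hright
  · rw [if_neg hx.not_gt]
    refine (hg x).hasDerivAt.congr_of_eventuallyEq ?_
    filter_upwards [Ioi_mem_nhds hx] with y hy using if_neg (not_lt.mpr hy.le)

theorem deriv_ite_lt (hf : Differentiable ℝ f) (hg : Differentiable ℝ g)
    (h₀ : f x₀ = g x₀) (h₁ : deriv f x₀ = deriv g x₀) :
    deriv (fun y => if y < x₀ then f y else g y)
      = fun x => if x < x₀ then deriv f x else deriv g x :=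
  funext fun x => (hasDerivAt_ite_lt hf hg h₀ h₁ x).deriv

theorem contDiff_two_ite_lt (hf : ContDiff ℝ 2 f) (hg : ContDiff ℝ 2 g) (h₀ : f x₀ = g x₀)
    (h₁ : deriv f x₀ = deriv g x₀) (h₂ : deriv (deriv f) x₀ = deriv (deriv g) x₀) :
    ContDiff ℝ 2 fun y => if y < x₀ then f y else g y := by
  have hf₁ := hf.differentiable two_ne_zero
  have hg₁ := hg.differentiable two_ne_zero
  have hf' : ContDiff ℝ 1 (deriv f) := hf.iterate_deriv' 1 1
  have hg' : ContDiff ℝ 1 (deriv g) := hg.iterate_deriv' 1 1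
  have hf'₁ := hf'.differentiable one_ne_zero
  have hg'₁ := hg'.differentiable one_ne_zero
  rw [show (2 : WithTop ℕ∞) = 1 + 1 from rfl, contDiff_succ_iff_deriv,
    deriv_ite_lt hf₁ hg₁ h₀ h₁, contDiff_one_iff_deriv, deriv_ite_lt hf'₁ hg'₁ h₁ h₂]
  exact ⟨fun x => (hasDerivAt_ite_lt hf₁ hg₁ h₀ h₁ x).differentiableAt, by simp,
    fun x => (hasDerivAt_ite_lt hf'₁ hg'₁ h₁ h₂ x).differentiableAt,
    (hf'.continuous_deriv le_rfl).ite_lt (hg'.continuous_deriv le_rfl) h₂⟩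

end Gluing

theorem char_eq_of_eq_larger_root {μ σ β lam : ℝ} (hσ : σ ≠ 0)
    (hdisc : 0 ≤ μ^2 + 2*β*σ^2) (hlam : lam = (-μ + √(μ^2 + 2*β*σ^2)) / σ^2) :
    σ^2/2 * lam^2 + μ * lam = β := by
  have hs : discrim (σ^2/2) μ (-β) = √(μ^2 + 2*β*σ^2) * √(μ^2 + 2*β*σ^2) := by
    rw [discrim, mul_self_sqrt hdisc]; ring
  have := (quadratic_eq_zero_iff (by positivity) hs lam).2 (Or.inl (by rw [hlam]; ring))
  linear_combination this

theorem lt_larger_root {μ σ β a : ℝ} (hσ : σ ≠ 0) (h : μ * a + (1/2) * σ^2 * a^2 < β) :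
    a < (-μ + √(μ^2 + 2*β*σ^2)) / σ^2 := by
  have hσ2 : 0 < σ^2 := by positivity
  rw [lt_div_iff₀ hσ2, ← sub_lt_iff_lt_add']
  exact lt_sqrt_of_sq_lt (by nlinarith)

theorem exp_mul_le_one_sub_add_mul_exp {θ : ℝ} (hθ₀ : 0 ≤ θ) (hθ₁ : θ ≤ 1) (s : ℝ) :
    exp (θ * s) ≤ 1 - θ + θ * exp s := by
  simpa using convexOn_exp.2 (mem_univ 0) (mem_univ s) (sub_nonneg.2 hθ₁) hθ₀ (by ring)

section ExpSum

variable (K a C lam : ℝ)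

theorem hasDerivAt_expSum (x : ℝ) :
    HasDerivAt (fun y => K * exp (a * y) + C * exp (lam * y))
      (K * a * exp (a * x) + C * lam * exp (lam * x)) x := by
  have hexp (k : ℝ) : HasDerivAt (fun y => exp (k * y)) (exp (k * x) * k) x :=
    ((hasDerivAt_id x).const_mul k).exp.congr_deriv (by simp)
  exact (((hexp a).const_mul K).add ((hexp lam).const_mul C)).congr_deriv (by ring)

theorem deriv_expSum :
    deriv (fun y => K * exp (a * y) + C * exp (lam * y))
      = fun x => K * a * exp (a * x) + C * lam * exp (lam * x) :=
  funext fun x => (hasDerivAt_expSum K a C lam x).deriv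

end ExpSum

section ValueFunction

variable {μ σ c a β lam K C xhat : ℝ}

theorem expSum_ode (hβ : μ * a + (1/2) * σ^2 * a^2 < β) (hroot : σ^2/2 * lam^2 + μ * lam = β)
    (hK : K = 1 / (β - μ*a - (1/2)*σ^2*a^2)) (x : ℝ) :
    exp (a*x) - β * (K * exp (a*x) + C * exp (lam*x))
      + μ * (K * a * exp (a*x) + C * lam * exp (lam*x))
      + σ^2/2 * (K * a * a * exp (a*x) + C * lam * lam * exp (lam*x)) = 0 := by
  have hKD : K * (β - μ*a - (1/2)*σ^2*a^2) = 1 := by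
    rw [hK]; exact one_div_mul_cancel (by linarith)
  linear_combination (-exp (a*x)) * hKD + (C * exp (lam*x)) * hroot

theorem exp_mul_threshold (ha : 0 < a) (hc : 0 < c) (hβ : μ * a + (1/2) * σ^2 * a^2 < β)
    (hla : a < lam)
    (hxhat : xhat = (1/a) * log (lam*c*(β - μ*a - (1/2)*σ^2*a^2) / (lam*a - a^2))) :
    exp (a * xhat) = lam*c*(β - μ*a - (1/2)*σ^2*a^2) / (lam*a - a^2) := by
  have hpos : 0 < lam*c*(β - μ*a - (1/2)*σ^2*a^2) / (lam*a - a^2) :=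
    div_pos (mul_pos (mul_pos (ha.trans hla) hc) (by linarith)) (by nlinarith)
  rw [hxhat, ← mul_assoc, mul_one_div_cancel ha.ne', one_mul, exp_log hpos]

theorem mul_exp_mul_threshold
    (hC : C = -(a^2 / (lam^2 * (β - μ*a - (1/2)*σ^2*a^2))) * exp ((a - lam) * xhat)) :
    C * exp (lam * xhat) = -(a^2 / (lam^2 * (β - μ*a - (1/2)*σ^2*a^2))) * exp (a * xhat) := by
  rw [hC, mul_assoc, ← exp_add]
  ring_nf

theorem smooth_fit_deriv2 (hβ : μ * a + (1/2) * σ^2 * a^2 < β) (hlam : lam ≠ 0)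
    (hK : K = 1 / (β - μ*a - (1/2)*σ^2*a^2))
    (hC : C = -(a^2 / (lam^2 * (β - μ*a - (1/2)*σ^2*a^2))) * exp ((a - lam) * xhat)) :
    K * a * a * exp (a*xhat) + C * lam * lam * exp (lam*xhat) = 0 := by
  have hCP := mul_exp_mul_threshold hC
  have hD : β - μ*a - (1/2)*σ^2*a^2 ≠ 0 := by linarith
  generalize β - μ*a - (1/2)*σ^2*a^2 = D at hK hCP hD
  rw [show C * lam * lam * exp (lam*xhat) = lam^2 * (C * exp (lam*xhat)) by ring, hCP, hK]
  field_simp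
  ring

theorem smooth_fit_deriv (ha : 0 < a) (hc : 0 < c) (hβ : μ * a + (1/2) * σ^2 * a^2 < β)
    (hla : a < lam) (hK : K = 1 / (β - μ*a - (1/2)*σ^2*a^2))
    (hxhat : xhat = (1/a) * log (lam*c*(β - μ*a - (1/2)*σ^2*a^2) / (lam*a - a^2)))
    (hC : C = -(a^2 / (lam^2 * (β - μ*a - (1/2)*σ^2*a^2))) * exp ((a - lam) * xhat)) :
    K * a * exp (a*xhat) + C * lam * exp (lam*xhat) = c := by
  have hCP := mul_exp_mul_threshold hC
  have hE := exp_mul_threshold ha hc hβ hla hxhat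
  have hD : β - μ*a - (1/2)*σ^2*a^2 ≠ 0 := by linarith
  have hlam : lam ≠ 0 := (ha.trans hla).ne'
  have hne : lam - a ≠ 0 := sub_ne_zero.2 hla.ne'
  generalize β - μ*a - (1/2)*σ^2*a^2 = D at hK hCP hE hD
  rw [show C * lam * exp (lam*xhat) = lam * (C * exp (lam*xhat)) by ring, hCP, hK, hE]
  field_simp
  ring

theorem expSum_deriv_le (ha : 0 < a) (hc : 0 < c) (hβ : μ * a + (1/2) * σ^2 * a^2 < β)
    (hla : a < lam) (hK : K = 1 / (β - μ*a - (1/2)*σ^2*a^2))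
    (hxhat : xhat = (1/a) * log (lam*c*(β - μ*a - (1/2)*σ^2*a^2) / (lam*a - a^2)))
    (hC : C = -(a^2 / (lam^2 * (β - μ*a - (1/2)*σ^2*a^2))) * exp ((a - lam) * xhat)) (x : ℝ) :
    K * a * exp (a*x) + C * lam * exp (lam*x) ≤ c := by
  have hlam : 0 < lam := ha.trans hla
  have hconv := exp_mul_le_one_sub_add_mul_exp (div_nonneg ha.le hlam.le)
    ((div_le_one hlam).2 hla.le) (lam * (x - xhat))
  rw [show a / lam * (lam * (x - xhat)) = a * (x - xhat) by field_simp] at hconv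
  have hfit := smooth_fit_deriv ha hc hβ hla hK hxhat hC
  have hCP := mul_exp_mul_threshold hC
  have hD : 0 < β - μ*a - (1/2)*σ^2*a^2 := by linarith
  generalize β - μ*a - (1/2)*σ^2*a^2 = D at hK hCP hD
  have hsplit (k : ℝ) : exp (k * x) = exp (k * xhat) * exp (k * (x - xhat)) := by
    rw [← exp_add]; ring_nf
  have hKa : K * a * exp (a*xhat) = a * exp (a*xhat) / D := by rw [hK]; ring
  have hCl : C * lam * exp (lam*xhat) = -(a/lam) * (a * exp (a*xhat) / D) := by
    rw [mul_right_comm, hCP]; field_simp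
  have hmargin : c - (K * a * exp (a*x) + C * lam * exp (lam*x))
      = a * exp (a*xhat) / D
        * (1 - a/lam + a/lam * exp (lam * (x - xhat)) - exp (a * (x - xhat))) := by
    rw [← hfit, hsplit a, hsplit lam]
    linear_combination (1 - exp (a * (x - xhat))) * hKa + (1 - exp (lam * (x - xhat))) * hCl
  have : 0 ≤ a * exp (a*xhat) / D
      * (1 - a/lam + a/lam * exp (lam * (x - xhat)) - exp (a * (x - xhat))) :=
    mul_nonneg (by positivity) (by linarith)
  linarith

theorem beta_mul_le_mul_exp_threshold (ha : 0 < a) (hc : 0 < c)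
    (hβ : μ * a + (1/2) * σ^2 * a^2 < β) (hroot : σ^2/2 * lam^2 + μ * lam = β) (hla : a < lam)
    (hxhat : xhat = (1/a) * log (lam*c*(β - μ*a - (1/2)*σ^2*a^2) / (lam*a - a^2))) :
    β * c ≤ a * exp (a * xhat) := by
  have hE := exp_mul_threshold ha hc hβ hla hxhat
  rw [eq_div_iff (by nlinarith)] at hE
  have hexcess : a * exp (a * xhat) - β * c = c * a * σ^2 * lam / 2 :=
    mul_right_cancel₀ (sub_ne_zero.2 hla.ne') (by linear_combination hE - c * a * hroot)
  have : 0 ≤ c * a * σ^2 * lam / 2 := by have := ha.trans hla; positivity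
  linarith

theorem beta_mul_affine_le (ha : 0 < a) (hc : 0 < c) (hβ : μ * a + (1/2) * σ^2 * a^2 < β)
    (hroot : σ^2/2 * lam^2 + μ * lam = β) (hla : a < lam)
    (hK : K = 1 / (β - μ*a - (1/2)*σ^2*a^2))
    (hxhat : xhat = (1/a) * log (lam*c*(β - μ*a - (1/2)*σ^2*a^2) / (lam*a - a^2)))
    (hC : C = -(a^2 / (lam^2 * (β - μ*a - (1/2)*σ^2*a^2))) * exp ((a - lam) * xhat))
    {x : ℝ} (hx : xhat ≤ x) :
    β * (c * (x - xhat) + K * exp (a*xhat) + C * exp (lam*xhat)) ≤ exp (a*x) + μ * c := by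
  have hvalue : β * (K * exp (a*xhat) + C * exp (lam*xhat)) = exp (a*xhat) + μ * c := by
    linear_combination -expSum_ode (C := C) hβ hroot hK xhat
      + μ * smooth_fit_deriv ha hc hβ hla hK hxhat hC
      + σ^2/2 * smooth_fit_deriv2 hβ (ha.trans hla).ne' hK hC
  have htangent : exp (a*xhat) * (a * (x - xhat) + 1) ≤ exp (a*x) := by
    rw [show a * x = a * xhat + a * (x - xhat) by ring, exp_add]
    exact mul_le_mul_of_nonneg_left (add_one_le_exp _) (exp_pos _).le
  have hslope := mul_le_mul_of_nonneg_right
    (beta_mul_le_mul_exp_threshold ha hc hβ hroot hla hxhat) (sub_nonneg.2 hx)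
  linarith

end ValueFunction

theorem stmt_8_general
    (μ σ c a β : ℝ)
    (hσ : σ > 0) (hc : c > 0) (ha : a > 0)
    (hβ' : β > μ * a + (1/2) * σ^2 * a^2)
    (lam₂ K₁ xhat C₂ : ℝ)
    (hlam₂ : lam₂ = (-μ + Real.sqrt (μ^2 + 2*β*σ^2)) / σ^2)
    (hK₁ : K₁ = 1 / (β - μ*a - (1/2)*σ^2*a^2))
    (hxhat : xhat = (1/a) * Real.log (lam₂*c*(β - μ*a - (1/2)*σ^2*a^2) / (lam₂*a - a^2)))
    (hC₂ : C₂ = -(a^2 / (lam₂^2 * (β - μ*a - (1/2)*σ^2*a^2))) * Real.exp ((a - lam₂) * xhat))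
    (V : ℝ → ℝ)
    (hV : ∀ x, V x = if x < xhat then K₁ * Real.exp (a*x) + C₂ * Real.exp (lam₂*x)
      else c*(x - xhat) + K₁ * Real.exp (a*xhat) + C₂ * Real.exp (lam₂*xhat))
    :
    ContDiff ℝ 2 V ∧
    ∀ x : ℝ,
      min (Real.exp (a*x) - β * V x + μ * deriv V x + (σ^2/2) * deriv (deriv V) x)
          (c - deriv V x) = 0 := by
  have hroot := char_eq_of_eq_larger_root hσ.ne' (by nlinarith [sq_nonneg (μ + a*σ^2)]) hlam₂
  have hla : a < lam₂ := hlam₂ ▸ lt_larger_root hσ.ne' hβ'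
  set g : ℝ → ℝ := fun x => K₁ * exp (a*x) + C₂ * exp (lam₂*x) with hg
  set ℓ : ℝ → ℝ := fun x => c*(x - xhat) + K₁ * exp (a*xhat) + C₂ * exp (lam₂*xhat) with hℓ
  have hVeq : V = fun x => if x < xhat then g x else ℓ x := funext hV
  have hg' := deriv_expSum K₁ a C₂ lam₂
  have hg'' : deriv (deriv g)
      = fun x => K₁ * a * a * exp (a*x) + C₂ * lam₂ * lam₂ * exp (lam₂*x) := by
    rw [hg', deriv_expSum]
  have hℓ' : deriv ℓ = fun _ => c := by simp [hℓ]
  have hfit₀ : g xhat = ℓ xhat := by simp [hg, hℓ]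
  have hfit₁ : deriv g xhat = deriv ℓ xhat := by
    rw [hg', hℓ']; exact smooth_fit_deriv ha hc hβ' hla hK₁ hxhat hC₂
  have hfit₂ : deriv (deriv g) xhat = deriv (deriv ℓ) xhat := by
    rw [hg'', hℓ', deriv_const]; exact smooth_fit_deriv2 hβ' (ha.trans hla).ne' hK₁ hC₂
  have hgC : ContDiff ℝ 2 g := by fun_prop
  have hℓC : ContDiff ℝ 2 ℓ := by fun_prop
  have hV' := deriv_ite_lt (hgC.differentiable two_ne_zero) (hℓC.differentiable two_ne_zero)
    hfit₀ hfit₁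
  have hV'' := deriv_ite_lt (by rw [hg']; fun_prop) (by rw [hℓ']; fun_prop) hfit₁ hfit₂
  refine ⟨hVeq ▸ contDiff_two_ite_lt hgC hℓC hfit₀ hfit₁ hfit₂, fun x => ?_⟩
  rw [hVeq, hV', hV'']
  rcases lt_or_ge x xhat with hx | hx
  · simp only [hx, if_true]
    rw [hg'', hg', hg]
    beta_reduce
    rw [expSum_ode hβ' hroot hK₁]
    exact min_eq_left (sub_nonneg.2 (expSum_deriv_le ha hc hβ' hla hK₁ hxhat hC₂ x))
  · simp only [not_lt.2 hx, if_false, hℓ', deriv_const, sub_self]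
    exact min_eq_right (by linarith [beta_mul_affine_le ha hc hβ' hroot hla hK₁ hxhat hC₂ hx])

theorem stmt_8
    (μ σ c a β : ℝ)
    (hσ : σ > 0) (hc : c > 0) (ha : a > 0) (hβ : β > 0)
    (hβ' : β > μ * a + (1/2) * σ^2 * a^2)
    (lam₁ lam₂ K₁ xhat C₂ : ℝ)
    (hlam₁ : lam₁ = (-μ - Real.sqrt (μ^2 + 2*β*σ^2)) / σ^2)
    (hlam₂ : lam₂ = (-μ + Real.sqrt (μ^2 + 2*β*σ^2)) / σ^2)
    (hK₁ : K₁ = 1 / (β - μ*a - (1/2)*σ^2*a^2))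
    (hxhat : xhat = (1/a) * Real.log (lam₂*c*(β - μ*a - (1/2)*σ^2*a^2) / (lam₂*a - a^2)))
    (hC₂ : C₂ = -(a^2 / (lam₂^2 * (β - μ*a - (1/2)*σ^2*a^2))) * Real.exp ((a - lam₂) * xhat))
    (V : ℝ → ℝ)
    (hV : ∀ x, V x = if x < xhat then K₁ * Real.exp (a*x) + C₂ * Real.exp (lam₂*x)
      else c*(x - xhat) + K₁ * Real.exp (a*xhat) + C₂ * Real.exp (lam₂*xhat))
    :
    ContDiff ℝ 2 V ∧
    ∀ x : ℝ,
      min (Real.exp (a*x) - β * V x + μ * deriv V x + (σ^2/2) * deriv (deriv V) x)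
          (c - deriv V x) = 0 :=
  stmt_8_general μ σ c a β hσ hc ha hβ' lam₂ K₁ xhat C₂ hlam₂ hK₁ hxhat hC₂ V hV
end

section
/- For every z ∈ ℝ, if K₂(z) ≥ 0 then z < x̂. -/
/-!
Write `D = β - μa - σ²a²/2 > 0`. Then `λ₂` is the positive root of `σ²λ²/2 + μλ - β`, and this
quadratic takes the value `-D < 0` at `a`, so `a < λ₂`. Since `λ₂ e^{λ₂ z} > 0`, `K₂(z) ≥ 0` means
`a e^{az} ≤ cD`, i.e. `e^{az} ≤ cD/a`, which is strictly smaller than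
`λ₂cD/(λ₂a - a²) = (cD/a) · λ₂/(λ₂ - a) = e^{a x̂}`.
-/

open Real Filter

theorem lt_neg_add_sqrt_div_sq {μ σ a β : ℝ} (hσ : σ ≠ 0)
    (h : μ * a + (1/2) * σ^2 * a^2 < β) :
    a < (-μ + √(μ^2 + 2*β*σ^2)) / σ^2 := by
  have hσ2 : 0 < σ^2 := by positivity
  have hsq : (μ + σ^2 * a)^2 < μ^2 + 2*β*σ^2 := by nlinarith
  rw [lt_div_iff₀ hσ2]
  linarith [lt_sqrt_of_sq_lt hsq]

theorem lt_inv_mul_log_of_mul_exp_le {a lam M z : ℝ} (ha : 0 < a) (hlam : a < lam)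
    (h : a * exp (a * z) ≤ M) :
    z < (1/a) * log (lam * M / (lam * a - a^2)) := by
  have hM : 0 < M := lt_of_lt_of_le (by positivity) h
  have hgap : 0 < lam * a - a^2 := by nlinarith
  have hexp : exp (a * z) < lam * M / (lam * a - a^2) := by
    rw [lt_div_iff₀ hgap]
    nlinarith
  have hlog : a * z < log (lam * M / (lam * a - a^2)) :=
    (lt_log_iff_exp_lt (lt_trans (exp_pos _) hexp)).2 hexp
  rw [one_div, ← div_eq_inv_mul, lt_div_iff₀ ha, mul_comm]
  exact hlog

theorem stmt_12_general
    (μ σ c a β : ℝ)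
    (hσ : σ > 0) (ha : a > 0)
    (hβ' : β > μ * a + (1/2) * σ^2 * a^2)
    (lam₂ K₁ xhat : ℝ)
    (hlam₂ : lam₂ = (-μ + Real.sqrt (μ^2 + 2*β*σ^2)) / σ^2)
    (hK₁ : K₁ = 1 / (β - μ*a - (1/2)*σ^2*a^2))
    (hxhat : xhat = (1/a) * Real.log (lam₂*c*(β - μ*a - (1/2)*σ^2*a^2) / (lam₂*a - a^2)))
    (K₂ : ℝ → ℝ)
    (hK₂ : ∀ z, K₂ z = (c - K₁*a*Real.exp (a*z)) / (lam₂ * Real.exp (lam₂*z)))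
    :
    ∀ z : ℝ, K₂ z ≥ 0 → z < xhat := by
  intro z hz
  set D := β - μ*a - (1/2)*σ^2*a^2
  have hD : 0 < D := by simp only [D]; linarith
  have hlam : a < lam₂ := hlam₂ ▸ lt_neg_add_sqrt_div_sq hσ.ne' hβ'
  have hden : 0 < lam₂ * exp (lam₂ * z) := mul_pos (ha.trans hlam) (exp_pos _)
  have hnum : 0 ≤ c - K₁ * a * exp (a * z) := by
    have := mul_nonneg hz hden.le
    rwa [hK₂, div_mul_cancel₀ _ hden.ne'] at this
  have hbound : a * exp (a * z) ≤ c * D := by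
    rwa [hK₁, one_div_mul_eq_div, div_mul_eq_mul_div, sub_nonneg, div_le_iff₀ hD] at hnum
  rw [hxhat, mul_assoc]
  exact lt_inv_mul_log_of_mul_exp_le ha hlam hbound

theorem stmt_12
    (μ σ c a β : ℝ)
    (hσ : σ > 0) (hc : c > 0) (ha : a > 0) (hβ : β > 0)
    (hβ' : β > μ * a + (1/2) * σ^2 * a^2)
    (lam₁ lam₂ K₁ xhat C₂ : ℝ)
    (hlam₁ : lam₁ = (-μ - Real.sqrt (μ^2 + 2*β*σ^2)) / σ^2)
    (hlam₂ : lam₂ = (-μ + Real.sqrt (μ^2 + 2*β*σ^2)) / σ^2)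
    (hK₁ : K₁ = 1 / (β - μ*a - (1/2)*σ^2*a^2))
    (hxhat : xhat = (1/a) * Real.log (lam₂*c*(β - μ*a - (1/2)*σ^2*a^2) / (lam₂*a - a^2)))
    (hC₂ : C₂ = -(a^2 / (lam₂^2 * (β - μ*a - (1/2)*σ^2*a^2))) * Real.exp ((a - lam₂) * xhat))
    (K₂ : ℝ → ℝ)
    (hK₂ : ∀ z, K₂ z = (c - K₁*a*Real.exp (a*z)) / (lam₂ * Real.exp (lam₂*z)))
    :
    ∀ z : ℝ, K₂ z ≥ 0 → z < xhat :=
  stmt_12_general μ σ c a β hσ ha hβ' lam₂ K₁ xhat hlam₂ hK₁ hxhat K₂ hK₂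
end

section
/- For every z ∈ ℝ one has the identity K₁·a²·e^{a·z} + K₂(z)·λ₂²·e^{λ₂·z} = λ₂·c − K₁·a·(λ₂ − a)·e^{a·z}, and this quantity (the second derivative at the boundary z of the value function of the control law with boundary z) is strictly positive if z < x̂, equals zero if z = x̂, and is strictly negative if z > x̂. -/
open Real

/-!
The boundary second derivative simplifies to `λ₂ c - B e^{a z}` with `B = K₁ a (λ₂ - a)`.
Since `a` lies below the positive root `λ₂` of `½σ²λ² + μλ - β` (the quadratic is negative
at `a`), `B > 0`, so this is strictly decreasing in `z`, and `x̂ = a⁻¹ log (λ₂ c / B)` is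
exactly its zero.
-/

lemma lt_quadratic_root {μ β s x : ℝ} (hs : 0 < s) (hx : μ * x + (1/2) * s * x^2 < β) :
    x < (-μ + √(μ^2 + 2*β*s)) / s := by
  rw [lt_div_iff₀ hs]
  suffices μ + s * x < √(μ^2 + 2*β*s) by linarith
  rcases le_or_gt 0 (μ + s * x) with h | h
  · rw [Real.lt_sqrt h]
    nlinarith
  · exact h.trans_le (Real.sqrt_nonneg _)

lemma mul_sq_exp_add_div_mul_sq_exp (K c a l z : ℝ) :
    K*a^2*exp (a*z) + (c - K*a*exp (a*z)) / (l * exp (l*z)) * l^2 * exp (l*z)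
      = l*c - K*a*(l - a)*exp (a*z) := by
  field_simp
  ring

lemma strictAnti_sub_mul_exp {A B a : ℝ} (hB : 0 < B) (ha : 0 < a) :
    StrictAnti fun z => A - B * exp (a*z) := fun _ _ h => by
  have := exp_lt_exp.mpr (mul_lt_mul_of_pos_left h ha)
  dsimp only
  nlinarith

lemma sub_mul_exp_log_div_eq_zero {A B a : ℝ} (hA : 0 < A) (hB : 0 < B) (ha : 0 < a) :
    A - B * exp (a * ((1/a) * log (A/B))) = 0 := by
  rw [← mul_assoc, mul_one_div_cancel ha.ne', one_mul, exp_log (div_pos hA hB)]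
  field_simp
  ring

theorem stmt_15_general
    (μ σ c a β : ℝ)
    (hσ : σ > 0) (hc : c > 0) (ha : a > 0)
    (hβ' : β > μ * a + (1/2) * σ^2 * a^2)
    (lam₂ K₁ xhat : ℝ)
    (hlam₂ : lam₂ = (-μ + Real.sqrt (μ^2 + 2*β*σ^2)) / σ^2)
    (hK₁ : K₁ = 1 / (β - μ*a - (1/2)*σ^2*a^2))
    (hxhat : xhat = (1/a) * Real.log (lam₂*c*(β - μ*a - (1/2)*σ^2*a^2) / (lam₂*a - a^2)))
    (K₂ : ℝ → ℝ)
    (hK₂ : ∀ z, K₂ z = (c - K₁*a*Real.exp (a*z)) / (lam₂ * Real.exp (lam₂*z)))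
    :
    ∀ z : ℝ,
      (K₁*a^2*Real.exp (a*z) + K₂ z * lam₂^2 * Real.exp (lam₂*z)
        = lam₂*c - K₁*a*(lam₂ - a)*Real.exp (a*z)) ∧
      (z < xhat → K₁*a^2*Real.exp (a*z) + K₂ z * lam₂^2 * Real.exp (lam₂*z) > 0) ∧
      (z = xhat → K₁*a^2*Real.exp (a*z) + K₂ z * lam₂^2 * Real.exp (lam₂*z) = 0) ∧
      (z > xhat → K₁*a^2*Real.exp (a*z) + K₂ z * lam₂^2 * Real.exp (lam₂*z) < 0) := by
  have hD : 0 < β - μ*a - (1/2)*σ^2*a^2 := by linarith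
  have ha_lt : a < lam₂ := hlam₂ ▸ lt_quadratic_root (by positivity) hβ'
  have hlam₂_pos : 0 < lam₂ := ha.trans ha_lt
  have hB : 0 < K₁*a*(lam₂ - a) := by
    rw [hK₁]
    exact mul_pos (by positivity) (sub_pos.mpr ha_lt)
  have hxhat' : xhat = (1/a) * log (lam₂*c / (K₁*a*(lam₂ - a))) := by
    rw [hxhat, hK₁]
    congr 2
    field_simp
  have hzero := sub_mul_exp_log_div_eq_zero (mul_pos hlam₂_pos hc) hB ha
  have hanti := strictAnti_sub_mul_exp (A := lam₂*c) hB ha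
  rw [← hxhat'] at hzero
  intro z
  have hid : K₁*a^2*exp (a*z) + K₂ z * lam₂^2 * exp (lam₂*z)
      = lam₂*c - K₁*a*(lam₂ - a)*exp (a*z) :=
    hK₂ z ▸ mul_sq_exp_add_div_mul_sq_exp K₁ c a lam₂ z
  refine ⟨hid, fun hz => ?_, fun hz => ?_, fun hz => ?_⟩ <;> rw [hid]
  · exact hzero ▸ hanti hz
  · rw [hz, hzero]
  · exact hzero ▸ hanti hz

theorem stmt_15
    (μ σ c a β : ℝ)
    (hσ : σ > 0) (hc : c > 0) (ha : a > 0) (hβ : β > 0)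
    (hβ' : β > μ * a + (1/2) * σ^2 * a^2)
    (lam₁ lam₂ K₁ xhat C₂ : ℝ)
    (hlam₁ : lam₁ = (-μ - Real.sqrt (μ^2 + 2*β*σ^2)) / σ^2)
    (hlam₂ : lam₂ = (-μ + Real.sqrt (μ^2 + 2*β*σ^2)) / σ^2)
    (hK₁ : K₁ = 1 / (β - μ*a - (1/2)*σ^2*a^2))
    (hxhat : xhat = (1/a) * Real.log (lam₂*c*(β - μ*a - (1/2)*σ^2*a^2) / (lam₂*a - a^2)))
    (hC₂ : C₂ = -(a^2 / (lam₂^2 * (β - μ*a - (1/2)*σ^2*a^2))) * Real.exp ((a - lam₂) * xhat))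
    (K₂ : ℝ → ℝ)
    (hK₂ : ∀ z, K₂ z = (c - K₁*a*Real.exp (a*z)) / (lam₂ * Real.exp (lam₂*z)))
    :
    ∀ z : ℝ,
      (K₁*a^2*Real.exp (a*z) + K₂ z * lam₂^2 * Real.exp (lam₂*z)
        = lam₂*c - K₁*a*(lam₂ - a)*Real.exp (a*z)) ∧
      (z < xhat → K₁*a^2*Real.exp (a*z) + K₂ z * lam₂^2 * Real.exp (lam₂*z) > 0) ∧
      (z = xhat → K₁*a^2*Real.exp (a*z) + K₂ z * lam₂^2 * Real.exp (lam₂*z) = 0) ∧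
      (z > xhat → K₁*a^2*Real.exp (a*z) + K₂ z * lam₂^2 * Real.exp (lam₂*z) < 0) :=
  stmt_15_general μ σ c a β hσ hc ha hβ' lam₂ K₁ xhat hlam₂ hK₁ hxhat K₂ hK₂
end

section
/- If z < x̂ then e^{a·x̂} − β·( c·(x̂ − z) + K₁·e^{a·z} + K₂(z)·e^{λ₂·z} ) + μ·c < 0; that is, the first-order q-function of the singular control law with boundary z is strictly negative at the optimal boundary point x̂ whenever z < x̂. -/
/-!
`λ₂` is the positive root of the characteristic equation `σ²/2·λ² + μ·λ = β`, and the
hypothesis on `β` says that `a` lies strictly between its two roots, so `a < λ₂`. The definition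
of `x̂` is exactly what makes the `z`-independent part of the q-function vanish at `x̂`, so that
q-function equals `(β c / a)·(1 + t − eᵗ)` with `t = a·(z − x̂)`, which is negative for `t ≠ 0`.
-/

open Real

theorem quadratic_eq_at_upperRoot {μ σ β : ℝ} (hσ : σ ≠ 0) (hΔ : 0 ≤ μ ^ 2 + 2 * β * σ ^ 2) :
    σ ^ 2 / 2 * ((-μ + √(μ ^ 2 + 2 * β * σ ^ 2)) / σ ^ 2) ^ 2
      + μ * ((-μ + √(μ ^ 2 + 2 * β * σ ^ 2)) / σ ^ 2) = β := by
  have hs := sq_sqrt hΔ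
  generalize √(μ ^ 2 + 2 * β * σ ^ 2) = s at hs ⊢
  field_simp
  linear_combination hs

theorem lt_upperRoot_of_quadratic_lt {μ σ β x : ℝ} (hσ : σ ≠ 0)
    (hx : σ ^ 2 / 2 * x ^ 2 + μ * x < β) :
    x < (-μ + √(μ ^ 2 + 2 * β * σ ^ 2)) / σ ^ 2 := by
  have hσ2 : 0 < σ ^ 2 := by positivity
  have hsq : (σ ^ 2 * x + μ) ^ 2 < μ ^ 2 + 2 * β * σ ^ 2 := by nlinarith
  rw [lt_div_iff₀ hσ2]
  linarith [lt_sqrt_of_sq_lt hsq]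

theorem one_add_sub_exp_neg {t : ℝ} (ht : t ≠ 0) : 1 + t - exp t < 0 := by
  linarith [add_one_lt_exp ht]

theorem qFunction_eq {μ σ c a β l K₁ x z : ℝ} (ha : a ≠ 0) (hl : l ≠ 0) (hla : l ≠ a)
    (hchar : σ ^ 2 / 2 * l ^ 2 + μ * l = β) (hK₁ : K₁ * (β - μ*a - (1/2)*σ^2*a^2) = 1)
    (hx : exp (a * x) = l * c * (β - μ*a - (1/2)*σ^2*a^2) / (l * a - a ^ 2)) :
    exp (a * x) - β * (c * (x - z) + K₁ * exp (a * z) + (c - K₁ * a * exp (a * z)) / l) + μ * c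
      = β * c / a * (1 + a * (z - x) - exp (a * (z - x))) := by
  have hsplit : exp (a * z) = exp (a * (z - x)) * exp (a * x) := by
    rw [← exp_add]; ring_nf
  have hla' : l - a ≠ 0 := sub_ne_zero.mpr hla
  have hx' : exp (a * x) * (a * (l - a)) = l * c * (β - μ*a - (1/2)*σ^2*a^2) := by
    rw [hx, show l * a - a ^ 2 = a * (l - a) by ring]
    exact div_mul_cancel₀ _ (mul_ne_zero ha hla')
  have hcoef : K₁ * (l - a) * exp (a * x) * a = c * l := by
    linear_combination K₁ * hx' + (c * l) * hK₁
  have hconst : (exp (a * x) + μ * c) * a * l = β * c * l + β * c * a := by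
    refine mul_left_cancel₀ hla' ?_
    linear_combination l * hx' - c * a ^ 2 * hchar
  rw [hsplit]
  field_simp
  linear_combination hconst - β * exp (a * (z - x)) * hcoef

theorem stmt_16_general
    (μ σ c a β : ℝ)
    (hσ : σ > 0) (hc : c > 0) (ha : a > 0) (hβ : β > 0)
    (hβ' : β > μ * a + (1/2) * σ^2 * a^2)
    (lam₂ K₁ xhat : ℝ)
    (hlam₂ : lam₂ = (-μ + Real.sqrt (μ^2 + 2*β*σ^2)) / σ^2)
    (hK₁ : K₁ = 1 / (β - μ*a - (1/2)*σ^2*a^2))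
    (hxhat : xhat = (1/a) * Real.log (lam₂*c*(β - μ*a - (1/2)*σ^2*a^2) / (lam₂*a - a^2)))
    (K₂ : ℝ → ℝ)
    (hK₂ : ∀ z, K₂ z = (c - K₁*a*Real.exp (a*z)) / (lam₂ * Real.exp (lam₂*z)))
    :
    ∀ z : ℝ, z < xhat →
      Real.exp (a*xhat) - β * (c*(xhat - z) + K₁*Real.exp (a*z) + K₂ z * Real.exp (lam₂*z)) + μ*c < 0 := by
  intro z hz
  have hD : 0 < β - μ*a - (1/2)*σ^2*a^2 := by linarith
  have hchar : σ ^ 2 / 2 * lam₂ ^ 2 + μ * lam₂ = β :=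
    hlam₂ ▸ quadratic_eq_at_upperRoot hσ.ne' (by positivity)
  have hal : a < lam₂ := hlam₂ ▸ lt_upperRoot_of_quadratic_lt hσ.ne' (by linarith)
  have hlam₂_pos : 0 < lam₂ := ha.trans hal
  have hxhat_exp : exp (a * xhat) = lam₂*c*(β - μ*a - (1/2)*σ^2*a^2) / (lam₂*a - a^2) := by
    have hden : 0 < lam₂ * a - a ^ 2 := by nlinarith
    rw [hxhat, ← mul_assoc, mul_one_div_cancel ha.ne', one_mul, exp_log (by positivity)]
  have hK₂z : K₂ z * exp (lam₂ * z) = (c - K₁ * a * exp (a * z)) / lam₂ := by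
    rw [hK₂ z, div_mul_eq_mul_div, mul_div_mul_right _ _ (exp_pos _).ne']
  rw [hK₂z, qFunction_eq ha.ne' hlam₂_pos.ne' hal.ne' hchar (hK₁ ▸ one_div_mul_cancel hD.ne') hxhat_exp]
  exact mul_neg_of_pos_of_neg (by positivity)
    (one_add_sub_exp_neg (mul_neg_of_pos_of_neg ha (sub_neg.mpr hz)).ne)

theorem stmt_16
    (μ σ c a β : ℝ)
    (hσ : σ > 0) (hc : c > 0) (ha : a > 0) (hβ : β > 0)
    (hβ' : β > μ * a + (1/2) * σ^2 * a^2)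
    (lam₁ lam₂ K₁ xhat C₂ : ℝ)
    (hlam₁ : lam₁ = (-μ - Real.sqrt (μ^2 + 2*β*σ^2)) / σ^2)
    (hlam₂ : lam₂ = (-μ + Real.sqrt (μ^2 + 2*β*σ^2)) / σ^2)
    (hK₁ : K₁ = 1 / (β - μ*a - (1/2)*σ^2*a^2))
    (hxhat : xhat = (1/a) * Real.log (lam₂*c*(β - μ*a - (1/2)*σ^2*a^2) / (lam₂*a - a^2)))
    (hC₂ : C₂ = -(a^2 / (lam₂^2 * (β - μ*a - (1/2)*σ^2*a^2))) * Real.exp ((a - lam₂) * xhat))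
    (K₂ : ℝ → ℝ)
    (hK₂ : ∀ z, K₂ z = (c - K₁*a*Real.exp (a*z)) / (lam₂ * Real.exp (lam₂*z)))
    :
    ∀ z : ℝ, z < xhat →
      Real.exp (a*xhat) - β * (c*(xhat - z) + K₁*Real.exp (a*z) + K₂ z * Real.exp (lam₂*z)) + μ*c < 0 :=
  stmt_16_general μ σ c a β hσ hc ha hβ hβ' lam₂ K₁ xhat hlam₂ hK₁ hxhat K₂ hK₂
end

section
/- If z > x̂ then for every x ≥ z one has e^{a·x} − β·( c·(x − z) + K₁·e^{a·z} + K₂(z)·e^{λ₂·z} ) + μ·c > 0; that is, the first-order q-function of the singular control law with boundary z is strictly positive on the action region [z, ∞) whenever z > x̂. -/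
/-!
Write `D = β - μa - σ²a²/2 > 0` and `B = e^{az}`. Since `D > 0` says that `a` lies strictly between
the roots of the characteristic polynomial `σ²λ²/2 + μλ - β`, its larger root satisfies `λ₂ > a`.
Using `σ²λ₂²/2 + μλ₂ = β`, the value of the q-function at the boundary is
`(σ²/2) (a B (λ₂ - a) - c λ₂ D) / D`, and `z > x̂` is exactly `a B (λ₂ - a) > c λ₂ D`. The same
inequality gives the slope bound `a B > β c`, so on `[z, ∞)` the convex term `e^{ax}` outgrows the
linear term `β c (x - z)`.
-/

open Real

section CharacteristicRoot

variable {μ σ β lam : ℝ}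

theorem sq_lt_discr_of_lt {a : ℝ} (hσ : σ ≠ 0) (h : σ ^ 2 / 2 * a ^ 2 + μ * a < β) :
    (σ ^ 2 * a + μ) ^ 2 < μ ^ 2 + 2 * β * σ ^ 2 := by
  have hσ2 : 0 < σ ^ 2 := by positivity
  nlinarith

theorem quadratic_eq_of_eq_root (hσ : σ ≠ 0) (hdisc : 0 ≤ μ ^ 2 + 2 * β * σ ^ 2)
    (hlam : lam = (-μ + √(μ ^ 2 + 2 * β * σ ^ 2)) / σ ^ 2) :
    σ ^ 2 / 2 * lam ^ 2 + μ * lam = β := by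
  have hs := sq_sqrt hdisc
  subst hlam
  generalize √(μ ^ 2 + 2 * β * σ ^ 2) = s at hs
  field_simp
  linear_combination hs

theorem lt_root_of_quadratic_lt {a : ℝ} (hσ : σ ≠ 0)
    (hlam : lam = (-μ + √(μ ^ 2 + 2 * β * σ ^ 2)) / σ ^ 2) (h : σ ^ 2 / 2 * a ^ 2 + μ * a < β) :
    a < lam := by
  have hσ2 : 0 < σ ^ 2 := by positivity
  rw [hlam, lt_div_iff₀ hσ2]
  linarith [lt_sqrt_of_sq_lt (sq_lt_discr_of_lt hσ h)]

end CharacteristicRoot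

theorem lt_exp_mul_of_inv_mul_log_lt {a r z : ℝ} (ha : 0 < a) (hr : 0 < r)
    (h : 1 / a * log r < z) : r < exp (a * z) := by
  rw [one_div, inv_mul_lt_iff₀ ha, ← exp_lt_exp, exp_log hr] at h
  exact h

theorem mul_exp_mul_sub_le (a x z : ℝ) :
    a * exp (a * z) * (x - z) ≤ exp (a * x) - exp (a * z) := by
  have hsplit : exp (a * x) = exp (a * z) * exp (a * (x - z)) := by
    rw [← exp_add]; ring_nf
  have htangent := add_one_le_exp (a * (x - z))
  rw [hsplit]
  nlinarith [exp_pos (a * z)]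

theorem mul_sub_le_exp_sub_exp {a b x z : ℝ} (hb : b ≤ a * exp (a * z)) (hzx : z ≤ x) :
    b * (x - z) ≤ exp (a * x) - exp (a * z) :=
  (mul_le_mul_of_nonneg_right hb (sub_nonneg.2 hzx)).trans (mul_exp_mul_sub_le a x z)

section QFunction

variable {μ σ a β c lam K₁ B : ℝ}

theorem q_boundary_eq (hquad : σ ^ 2 / 2 * lam ^ 2 + μ * lam = β) (hlam : lam ≠ 0)
    (hK₁ : K₁ * (β - μ * a - 1 / 2 * σ ^ 2 * a ^ 2) = 1) :
    B - β * (K₁ * B + (c - K₁ * a * B) / lam) + μ * c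
      = σ ^ 2 / 2 * (a * B * (lam - a) - c * lam * (β - μ * a - 1 / 2 * σ ^ 2 * a ^ 2)) * K₁ := by
  have hβ_div : β * ((c - K₁ * a * B) / lam) = (σ ^ 2 / 2 * lam + μ) * (c - K₁ * a * B) := by
    rw [← hquad]; field_simp
  linear_combination (-1) * hβ_div + (σ ^ 2 / 2 * lam * c - B) * hK₁

theorem q_boundary_pos (hquad : σ ^ 2 / 2 * lam ^ 2 + μ * lam = β) (hσ : σ ≠ 0) (hlam : lam ≠ 0)
    (hK₁ : K₁ * (β - μ * a - 1 / 2 * σ ^ 2 * a ^ 2) = 1) (hK₁_pos : 0 < K₁)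
    (hB : c * lam * (β - μ * a - 1 / 2 * σ ^ 2 * a ^ 2) < a * B * (lam - a)) :
    0 < B - β * (K₁ * B + (c - K₁ * a * B) / lam) + μ * c := by
  rw [q_boundary_eq hquad hlam hK₁]
  have : 0 < a * B * (lam - a) - c * lam * (β - μ * a - 1 / 2 * σ ^ 2 * a ^ 2) := by linarith
  positivity

theorem mul_lt_of_boundary_lt (hquad : σ ^ 2 / 2 * lam ^ 2 + μ * lam = β) (hσ : σ ≠ 0)
    (hc : 0 < c) (ha : 0 < a) (hlam : a < lam)
    (hB : c * lam * (β - μ * a - 1 / 2 * σ ^ 2 * a ^ 2) < a * B * (lam - a)) :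
    β * c < a * B := by
  have hgap_eq : lam * (β - μ * a - 1 / 2 * σ ^ 2 * a ^ 2) - β * (lam - a)
      = σ ^ 2 / 2 * a * lam * (lam - a) := by
    linear_combination (-a) * hquad
  have hgap : β * (lam - a) < lam * (β - μ * a - 1 / 2 * σ ^ 2 * a ^ 2) := by
    have : 0 < σ ^ 2 / 2 * a * lam * (lam - a) := by
      have := ha.trans hlam
      have := sub_pos.2 hlam
      positivity
    linarith
  nlinarith [mul_lt_mul_of_pos_left hgap hc]

end QFunction

theorem stmt_17_general
    (μ σ c a β : ℝ)
    (hσ : σ > 0) (hc : c > 0) (ha : a > 0)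
    (hβ' : β > μ * a + (1/2) * σ^2 * a^2)
    (lam₂ K₁ xhat : ℝ)
    (hlam₂ : lam₂ = (-μ + Real.sqrt (μ^2 + 2*β*σ^2)) / σ^2)
    (hK₁ : K₁ = 1 / (β - μ*a - (1/2)*σ^2*a^2))
    (hxhat : xhat = (1/a) * Real.log (lam₂*c*(β - μ*a - (1/2)*σ^2*a^2) / (lam₂*a - a^2)))
    (K₂ : ℝ → ℝ)
    (hK₂ : ∀ z, K₂ z = (c - K₁*a*Real.exp (a*z)) / (lam₂ * Real.exp (lam₂*z)))
    :
    ∀ z : ℝ, z > xhat →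
      ∀ x : ℝ, x ≥ z →
        Real.exp (a*x) - β * (c*(x - z) + K₁*Real.exp (a*z) + K₂ z * Real.exp (lam₂*z)) + μ*c > 0 := by
  intro z hz x hx
  have hquad_a : σ ^ 2 / 2 * a ^ 2 + μ * a < β := by linarith
  have hD : 0 < β - μ*a - (1/2)*σ^2*a^2 := by linarith
  have hquad := quadratic_eq_of_eq_root hσ.ne'
    ((sq_nonneg _).trans (sq_lt_discr_of_lt hσ.ne' hquad_a).le) hlam₂
  have hlam_a : a < lam₂ := lt_root_of_quadratic_lt hσ.ne' hlam₂ hquad_a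
  have hlam_pos : 0 < lam₂ := ha.trans hlam_a
  have hcrit : c * lam₂ * (β - μ*a - (1/2)*σ^2*a^2) < a * exp (a * z) * (lam₂ - a) := by
    have hden : 0 < lam₂ * a - a ^ 2 := by nlinarith
    have := lt_exp_mul_of_inv_mul_log_lt ha (by positivity) (hxhat ▸ hz)
    rw [div_lt_iff₀ hden] at this
    linarith
  have hK₁_pos : 0 < K₁ := by rw [hK₁]; positivity
  have hK₁D : K₁ * (β - μ*a - (1/2)*σ^2*a^2) = 1 := by rw [hK₁, one_div_mul_cancel hD.ne']
  have hK₂z : K₂ z * exp (lam₂ * z) = (c - K₁ * a * exp (a * z)) / lam₂ := by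
    rw [hK₂ z]; field_simp
  rw [hK₂z]
  linarith [q_boundary_pos hquad hσ.ne' hlam_pos.ne' hK₁D hK₁_pos hcrit,
    mul_sub_le_exp_sub_exp (mul_lt_of_boundary_lt hquad hσ.ne' hc ha hlam_a hcrit).le hx]

theorem stmt_17
    (μ σ c a β : ℝ)
    (hσ : σ > 0) (hc : c > 0) (ha : a > 0) (hβ : β > 0)
    (hβ' : β > μ * a + (1/2) * σ^2 * a^2)
    (lam₁ lam₂ K₁ xhat C₂ : ℝ)
    (hlam₁ : lam₁ = (-μ - Real.sqrt (μ^2 + 2*β*σ^2)) / σ^2)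
    (hlam₂ : lam₂ = (-μ + Real.sqrt (μ^2 + 2*β*σ^2)) / σ^2)
    (hK₁ : K₁ = 1 / (β - μ*a - (1/2)*σ^2*a^2))
    (hxhat : xhat = (1/a) * Real.log (lam₂*c*(β - μ*a - (1/2)*σ^2*a^2) / (lam₂*a - a^2)))
    (hC₂ : C₂ = -(a^2 / (lam₂^2 * (β - μ*a - (1/2)*σ^2*a^2))) * Real.exp ((a - lam₂) * xhat))
    (K₂ : ℝ → ℝ)
    (hK₂ : ∀ z, K₂ z = (c - K₁*a*Real.exp (a*z)) / (lam₂ * Real.exp (lam₂*z)))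
    :
    ∀ z : ℝ, z > xhat →
      ∀ x : ℝ, x ≥ z →
        Real.exp (a*x) - β * (c*(x - z) + K₁*Real.exp (a*z) + K₂ z * Real.exp (lam₂*z)) + μ*c > 0 :=
  stmt_17_general μ σ c a β hσ hc ha hβ' lam₂ K₁ xhat hlam₂ hK₁ hxhat K₂ hK₂
end
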